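/- The family S_t: F → F, t ≥ 0, defined by [S_t φ](θ) = x_φ(t+θ) if t+θ > 0 and [S_t φ](θ) = φ(t+θ) if t+θ ≤ 0 (where x_φ is the unique solution of the delay equation with initial function φ) is a strongly continuous semigroup of continuous linear operators on the Fréchet space F: S_0 = I, S_{t+s} = S_t S_s, each S_t is continuous (bounded with respect to the seminorms), and t ↦ S_t φ is continuous from [0,∞) to F for each φ ∈ F. -/

import Mathlib

/-!
Uniqueness does the algebra: `r ↦ x_φ (s + r)` solves the equation with initial function `S_s φ`,
and `x_φ + c x_ψ` solves it with initial function `φ + c ψ`, which gives the semigroup law and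
linearity.

Continuity of `S_t` rests on an a priori bound for `x_φ` on `[0, mτ₁]` by finitely many seminorms
of `φ`, proved by the method of steps: on `[mτ₁, (m+1)τ₁]` every delayed argument `u - τ_i` lies in
`(-∞, mτ₁]`, where `x_φ` is already bounded, and the terms with `i ≥ n(m+1)` only see `φ`, so
their sum is at most `p_{m+1}(φ)`; Grönwall's inequality closes the step.

Strong continuity: in `p_k(S_t φ - S_{t₀} φ)` the finitely many head terms are small by uniform
continuity of `x_φ` on a compact interval, and the tail is dominated, uniformly in `t` near `t₀`,
by twice a tail of the convergent series `p_K(φ)`.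
-/

open Filter Set

/-- sup_{s ∈ [0, kτ₁]} |b_i φ(s − τ_i)|  (τ₁ = τ 0 with ℕ-indexing). -/
noncomputable def pTerm (b τ : ℕ → ℝ) (φ : ℝ → ℝ) (k i : ℕ) : ℝ :=
  ⨆ s : Set.Icc (0:ℝ) ((k : ℝ) * τ 0), |b i * φ ((s : ℝ) - τ i)|

/-- The seminorm p_k(φ) = Σ_{i ≥ n(k)} sup_{s ∈ [0,kτ₁]} |b_i φ(s − τ_i)|. -/
noncomputable def pSemi (b τ : ℕ → ℝ) (n : ℕ → ℕ) (φ : ℝ → ℝ) (k : ℕ) : ℝ :=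
  ∑' i : ℕ, pTerm b τ φ k (n k + i)

/-- The seminorm ‖φ‖_k = sup_{θ ∈ [−k,0]} |φ(θ)|. -/
noncomputable def normSemi (φ : ℝ → ℝ) (k : ℕ) : ℝ :=
  ⨆ θ : Set.Icc (-(k:ℝ)) (0:ℝ), |φ (θ : ℝ)|

/-- n(k) is the smallest natural number such that τ_i ≥ kτ₁ for all i ≥ n(k). -/
def nSpec (τ : ℕ → ℝ) (n : ℕ → ℕ) : Prop :=
  ∀ k : ℕ, (∀ i, n k ≤ i → (k : ℝ) * τ 0 ≤ τ i) ∧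
    ∀ m : ℕ, (∀ i, m ≤ i → (k : ℝ) * τ 0 ≤ τ i) → n k ≤ m

/-- Membership in the Fréchet space F: φ is continuous on (-∞,0] and
p_k(φ) < ∞ (i.e. the defining series is summable) for every k. -/
def memF (b τ : ℕ → ℝ) (n : ℕ → ℕ) (φ : ℝ → ℝ) : Prop :=
  ContinuousOn φ (Set.Iic 0) ∧
    ∀ k : ℕ, Summable fun i => pTerm b τ φ k (n k + i)

open Topology

/-- A solution of the infinite-delay equation with initial function φ. -/
def IsSolution (a : ℝ) (b τ : ℕ → ℝ) (φ x : ℝ → ℝ) : Prop :=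
  Continuous x ∧ (∀ θ ≤ (0:ℝ), x θ = φ θ) ∧
  (∀ t ≥ (0:ℝ), Summable fun i => b i * x (t - τ i)) ∧
  (∀ t ≥ (0:ℝ), HasDerivWithinAt x (a * x t + ∑' i, b i * x (t - τ i)) (Set.Ici 0) t) ∧
  ContinuousOn (fun t => a * x t + ∑' i, b i * x (t - τ i)) (Set.Ici 0)

/-- The solution semigroup: [S_t φ](θ) = x_φ(t+θ) for t+θ > 0 and φ(t+θ) for
t+θ ≤ 0; since the solution x_φ agrees with φ on (-∞,0], both cases are
x_φ(t+θ). -/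
noncomputable def Sop (sol : (ℝ → ℝ) → ℝ → ℝ) (t : ℝ) (φ : ℝ → ℝ) : ℝ → ℝ :=
  fun θ => sol φ (t + θ)

open Finset

section

variable {a : ℝ} {b τ : ℕ → ℝ} {n : ℕ → ℕ}

lemma bddAbove_range_abs_of_continuousOn {c d : ℝ} {f : ℝ → ℝ} (hf : ContinuousOn f (Icc c d)) :
    BddAbove (range fun s : Icc c d => |f s|) := by
  simpa only [Set.image_eq_range] using (isCompact_Icc.image_of_continuousOn hf.abs).bddAbove

lemma exists_le_and_add_mul_le {r : ℝ} (hr : 0 < r) (t : ℝ) (k : ℕ) :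
    ∃ m : ℕ, k ≤ m ∧ t + k * r ≤ m * r := by
  obtain ⟨j, hj⟩ := exists_nat_ge (t / r)
  refine ⟨k + j, Nat.le_add_right k j, ?_⟩
  have : t ≤ j * r := (div_le_iff₀ hr).1 hj
  push_cast
  linarith

lemma tendsto_nhds_zero_of_eventually_lt {α : Type*} {l : Filter α} {f : α → ℝ}
    (h0 : ∀ x, 0 ≤ f x) (h : ∀ ε > 0, ∀ᶠ x in l, f x < ε) : Tendsto f l (𝓝 0) :=
  tendsto_order.2 ⟨fun _ hε => Eventually.of_forall fun x => hε.trans_le (h0 x), h⟩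

lemma eventually_forall_abs_sub_comp_add_lt {x : ℝ → ℝ} (hx : Continuous x) (c d t₀ : ℝ)
    {ε : ℝ} (hε : 0 < ε) : ∀ᶠ t in 𝓝 t₀, ∀ θ ∈ Icc c d, |x (t + θ) - x (t₀ + θ)| < ε := by
  have hunif := Continuous.tendstoUniformly (fun t (θ : Icc c d) => x (t + θ))
    (by fun_prop) t₀
  filter_upwards [Metric.tendstoUniformly_iff.1 hunif ε hε] with t ht θ hθ
  simpa only [Real.dist_eq, abs_sub_comm] using ht ⟨θ, hθ⟩

lemma gronwallBound_eq_mul_add_mul (δ K ε x : ℝ) :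
    gronwallBound δ K ε x = δ * gronwallBound 1 K 0 x + ε * gronwallBound 0 K 1 x := by
  unfold gronwallBound
  split_ifs <;> ring

lemma pTerm_nonneg (φ : ℝ → ℝ) (k i : ℕ) : 0 ≤ pTerm b τ φ k i :=
  Real.iSup_nonneg fun _ => abs_nonneg _

lemma normSemi_nonneg (φ : ℝ → ℝ) (k : ℕ) : 0 ≤ normSemi φ k :=
  Real.iSup_nonneg fun _ => abs_nonneg _

lemma pSemi_nonneg (φ : ℝ → ℝ) (k : ℕ) : 0 ≤ pSemi b τ n φ k :=
  tsum_nonneg fun _ => pTerm_nonneg _ _ _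

lemma pTerm_le {φ : ℝ → ℝ} {k j : ℕ} {R : ℝ} (hR : 0 ≤ R)
    (h : ∀ s ∈ Icc (0:ℝ) (k * τ 0), |b j * φ (s - τ j)| ≤ R) : pTerm b τ φ k j ≤ R :=
  Real.iSup_le (fun s => h s s.2) hR

lemma pTerm_le_abs_mul {φ : ℝ → ℝ} {k j : ℕ} {R : ℝ} (hR : 0 ≤ R)
    (h : ∀ s ∈ Icc (0:ℝ) (k * τ 0), |φ (s - τ j)| ≤ R) : pTerm b τ φ k j ≤ |b j| * R :=
  pTerm_le (by positivity) fun s hs => by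
    rw [abs_mul]; exact mul_le_mul_of_nonneg_left (h s hs) (abs_nonneg _)

lemma abs_le_pTerm {φ : ℝ → ℝ} {k j : ℕ} (hφ : ContinuousOn φ (Icc (-τ j) (k * τ 0 - τ j)))
    {s : ℝ} (hs : s ∈ Icc (0:ℝ) (k * τ 0)) : |b j * φ (s - τ j)| ≤ pTerm b τ φ k j := by
  have hcont : ContinuousOn (fun s => b j * φ (s - τ j)) (Icc 0 (k * τ 0)) :=
    continuousOn_const.mul <| hφ.comp (continuousOn_id.sub continuousOn_const)
      fun s hs => ⟨by linarith [hs.1], by linarith [hs.2]⟩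
  exact le_ciSup (bddAbove_range_abs_of_continuousOn hcont) (⟨s, hs⟩ : Icc (0:ℝ) (k * τ 0))

lemma Icc_sub_subset_Iic {k j : ℕ} (hj : k * τ 0 ≤ τ j) :
    Icc (-τ j) (k * τ 0 - τ j) ⊆ Iic 0 :=
  fun _ hθ => hθ.2.trans (by linarith)

lemma normSemi_le {φ : ℝ → ℝ} {k : ℕ} {R : ℝ} (h : ∀ θ ∈ Icc (-(k:ℝ)) 0, |φ θ| ≤ R) :
    normSemi φ k ≤ R :=
  Real.iSup_le (fun θ => h θ θ.2) ((abs_nonneg _).trans (h 0 ⟨by simp, le_rfl⟩))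

lemma abs_le_normSemi {φ : ℝ → ℝ} {k : ℕ} (hφ : ContinuousOn φ (Iic 0)) {θ : ℝ}
    (hθ : θ ∈ Icc (-(k:ℝ)) 0) : |φ θ| ≤ normSemi φ k :=
  le_ciSup (bddAbove_range_abs_of_continuousOn (hφ.mono fun _ h => h.2))
    (⟨θ, hθ⟩ : Icc (-(k:ℝ)) 0)

lemma pTerm_sub_le {φ ψ : ℝ → ℝ} {k j : ℕ} (hφ : ContinuousOn φ (Icc (-τ j) (k * τ 0 - τ j)))
    (hψ : ContinuousOn ψ (Icc (-τ j) (k * τ 0 - τ j))) :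
    pTerm b τ (fun θ => φ θ - ψ θ) k j ≤ pTerm b τ φ k j + pTerm b τ ψ k j := by
  refine pTerm_le (add_nonneg (pTerm_nonneg _ _ _) (pTerm_nonneg _ _ _)) fun s hs => ?_
  calc |b j * (φ (s - τ j) - ψ (s - τ j))| = |b j * φ (s - τ j) - b j * ψ (s - τ j)| := by
        rw [mul_sub]
    _ ≤ |b j * φ (s - τ j)| + |b j * ψ (s - τ j)| := abs_sub _ _
    _ ≤ _ := add_le_add (abs_le_pTerm hφ hs) (abs_le_pTerm hψ hs)

lemma pTerm_add_const_mul_le {φ ψ : ℝ → ℝ} {k j : ℕ}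
    (hφ : ContinuousOn φ (Icc (-τ j) (k * τ 0 - τ j)))
    (hψ : ContinuousOn ψ (Icc (-τ j) (k * τ 0 - τ j))) (c : ℝ) :
    pTerm b τ (fun θ => φ θ + c * ψ θ) k j ≤ pTerm b τ φ k j + |c| * pTerm b τ ψ k j := by
  refine pTerm_le (add_nonneg (pTerm_nonneg _ _ _)
    (mul_nonneg (abs_nonneg _) (pTerm_nonneg _ _ _))) fun s hs => ?_
  calc |b j * (φ (s - τ j) + c * ψ (s - τ j))|
        = |b j * φ (s - τ j) + c * (b j * ψ (s - τ j))| := by ring_nf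
    _ ≤ |b j * φ (s - τ j)| + |c| * |b j * ψ (s - τ j)| := by
        rw [← abs_mul]; exact abs_add_le _ _
    _ ≤ _ := by gcongr <;> exact abs_le_pTerm ‹_› hs

lemma nSpec.monotone (hn : nSpec τ n) (hτ0 : 0 ≤ τ 0) : Monotone n := fun k k' hk =>
  (hn k).2 (n k') fun i hi =>
    (mul_le_mul_of_nonneg_right (by exact_mod_cast hk) hτ0).trans ((hn k').1 i hi)

lemma summable_pTerm_of_tail_le {ψ : ℝ → ℝ} {k L : ℕ} {g : ℕ → ℝ} (hg : Summable g)
    (htail : ∀ i, pTerm b τ ψ k (n k + (i + L)) ≤ g i) :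
    Summable fun i => pTerm b τ ψ k (n k + i) :=
  (summable_nat_add_iff L).1 (hg.of_nonneg_of_le (fun _ => pTerm_nonneg _ _ _) htail)

lemma pSemi_le_of_head_tail {ψ : ℝ → ℝ} {k L : ℕ} {R : ℝ} {g : ℕ → ℝ} (hg : Summable g)
    (hhead : ∀ i < L, pTerm b τ ψ k (n k + i) ≤ |b (n k + i)| * R)
    (htail : ∀ i, pTerm b τ ψ k (n k + (i + L)) ≤ g i) :
    pSemi b τ n ψ k ≤ (∑ i ∈ range L, |b (n k + i)|) * R + ∑' i, g i := by
  have hsum := summable_pTerm_of_tail_le hg htail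
  rw [pSemi, ← hsum.sum_add_tsum_nat_add L, sum_mul]
  exact add_le_add (sum_le_sum fun i hi => hhead i (mem_range.1 hi))
    (((summable_nat_add_iff L).2 hsum).tsum_le_tsum htail hg)

lemma memF_add_const_mul (hn : nSpec τ n) {φ ψ : ℝ → ℝ} (hφ : memF b τ n φ)
    (hψ : memF b τ n ψ) (c : ℝ) : memF b τ n (fun θ => φ θ + c * ψ θ) := by
  refine ⟨hφ.1.add (continuousOn_const.mul hψ.1), fun k => ?_⟩
  refine ((hφ.2 k).add ((hψ.2 k).mul_left |c|)).of_nonneg_of_le (fun _ => pTerm_nonneg _ _ _)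
    fun i => ?_
  have hsub := Icc_sub_subset_Iic (τ := τ) ((hn k).1 (n k + i) (Nat.le_add_right _ _))
  exact pTerm_add_const_mul_le (hφ.1.mono hsub) (hψ.1.mono hsub) c

lemma pTerm_comp_add_le {x φ : ℝ → ℝ} (hxφ : ∀ θ ≤ (0:ℝ), x θ = φ θ)
    (hφ : ContinuousOn φ (Iic 0)) {t : ℝ} (ht : 0 ≤ t) {k m j : ℕ}
    (hm : t + k * τ 0 ≤ m * τ 0) (hj : m * τ 0 ≤ τ j) :
    pTerm b τ (fun θ => x (t + θ)) k j ≤ pTerm b τ φ m j := by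
  refine pTerm_le (pTerm_nonneg _ _ _) fun s hs => ?_
  show |b j * x (t + (s - τ j))| ≤ _
  rw [show t + (s - τ j) = t + s - τ j by ring, hxφ _ (by linarith [hs.2])]
  exact abs_le_pTerm (hφ.mono (Icc_sub_subset_Iic hj)) ⟨by linarith [hs.1], by linarith [hs.2]⟩

lemma memF_comp_add (hτ0 : 0 < τ 0) (hn : nSpec τ n) {x φ : ℝ → ℝ} (hx : Continuous x)
    (hxφ : ∀ θ ≤ (0:ℝ), x θ = φ θ) (hφ : memF b τ n φ) {t : ℝ} (ht : 0 ≤ t) :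
    memF b τ n (fun θ => x (t + θ)) := by
  refine ⟨(hx.comp (continuous_const_add t)).continuousOn, fun k => ?_⟩
  obtain ⟨m, hkm, hm⟩ := exists_le_and_add_mul_le hτ0 t k
  have hnk := hn.monotone hτ0.le hkm
  refine summable_pTerm_of_tail_le (L := n m - n k) (hφ.2 m) fun i => ?_
  rw [show n k + (i + (n m - n k)) = n m + i by omega]
  exact pTerm_comp_add_le hxφ hφ.1 ht hm ((hn m).1 _ (Nat.le_add_right _ _))

lemma IsSolution.comp_add {φ x : ℝ → ℝ} (hx : IsSolution a b τ φ x) {s : ℝ} (hs : 0 ≤ s) :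
    IsSolution a b τ (fun θ => x (s + θ)) (fun r => x (s + r)) := by
  obtain ⟨hxc, -, hsum, hderiv, hrhs⟩ := hx
  have hshift : ∀ u i, s + (u - τ i) = s + u - τ i := fun _ _ => by ring
  have hmaps : MapsTo (fun r => s + r) (Ici 0) (Ici 0) := fun r (hr : 0 ≤ r) =>
    (by linarith : 0 ≤ s + r)
  refine ⟨hxc.comp (continuous_const_add s), fun _ _ => rfl, fun u hu => ?_, fun u hu => ?_, ?_⟩
  · simpa only [hshift] using hsum (s + u) (by linarith)
  · have := (hderiv (s + u) (by linarith)).comp u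
      ((hasDerivAt_id u).const_add s).hasDerivWithinAt hmaps
    rw [mul_one] at this
    simp only [hshift]
    exact this
  · simp only [hshift]
    exact hrhs.comp (continuous_const_add s).continuousOn hmaps

lemma IsSolution.add_const_mul {φ ψ x y : ℝ → ℝ} (hx : IsSolution a b τ φ x)
    (hy : IsSolution a b τ ψ y) (c : ℝ) :
    IsSolution a b τ (fun θ => φ θ + c * ψ θ) (fun r => x r + c * y r) := by
  obtain ⟨hxc, hxφ, hxsum, hxd, hxrhs⟩ := hx
  obtain ⟨hyc, hyψ, hysum, hyd, hyrhs⟩ := hy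
  have hterm : ∀ u, (fun i => b i * (x (u - τ i) + c * y (u - τ i)))
      = fun i => b i * x (u - τ i) + c * (b i * y (u - τ i)) := fun u => funext fun i => by ring
  have hrhs : ∀ u ≥ (0:ℝ), a * (x u + c * y u) + ∑' i, b i * (x (u - τ i) + c * y (u - τ i))
      = (a * x u + ∑' i, b i * x (u - τ i)) + c * (a * y u + ∑' i, b i * y (u - τ i)) := by
    intro u hu
    rw [hterm, (hxsum u hu).tsum_add ((hysum u hu).mul_left c), tsum_mul_left]
    ring
  refine ⟨hxc.add (continuous_const.mul hyc), fun θ hθ => by simp only [hxφ θ hθ, hyψ θ hθ],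
    fun u hu => ?_, fun u hu => ?_, ?_⟩
  · rw [hterm]; exact (hxsum u hu).add ((hysum u hu).mul_left c)
  · rw [hrhs u hu]; exact (hxd u hu).add ((hyd u hu).const_mul c)
  · exact (hxrhs.add (continuousOn_const.mul hyrhs)).congr fun u hu => hrhs u hu

section Uniqueness

variable {sol : (ℝ → ℝ) → ℝ → ℝ}

lemma sol_comp_add (hτ0 : 0 < τ 0) (hn : nSpec τ n)
    (hsol : ∀ φ, memF b τ n φ → IsSolution a b τ φ (sol φ))
    (huniq : ∀ φ x, memF b τ n φ → IsSolution a b τ φ x → x = sol φ)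
    {φ : ℝ → ℝ} (hφ : memF b τ n φ) {s : ℝ} (hs : 0 ≤ s) :
    sol (Sop sol s φ) = fun r => sol φ (s + r) :=
  (huniq _ _ (memF_comp_add hτ0 hn (hsol φ hφ).1 (hsol φ hφ).2.1 hφ hs)
    ((hsol φ hφ).comp_add hs)).symm

lemma Sop_add (hτ0 : 0 < τ 0) (hn : nSpec τ n)
    (hsol : ∀ φ, memF b τ n φ → IsSolution a b τ φ (sol φ))
    (huniq : ∀ φ x, memF b τ n φ → IsSolution a b τ φ x → x = sol φ)
    {φ : ℝ → ℝ} (hφ : memF b τ n φ) (t : ℝ) {s : ℝ} (hs : 0 ≤ s) :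
    Sop sol (t + s) φ = Sop sol t (Sop sol s φ) := by
  funext θ
  simp only [Sop, sol_comp_add hτ0 hn hsol huniq hφ hs]
  congr 1
  ring

lemma sol_add_const_mul (hn : nSpec τ n)
    (hsol : ∀ φ, memF b τ n φ → IsSolution a b τ φ (sol φ))
    (huniq : ∀ φ x, memF b τ n φ → IsSolution a b τ φ x → x = sol φ)
    {φ ψ : ℝ → ℝ} (hφ : memF b τ n φ) (hψ : memF b τ n ψ) (c : ℝ) :
    sol (fun θ => φ θ + c * ψ θ) = fun r => sol φ r + c * sol ψ r :=
  (huniq _ _ (memF_add_const_mul hn hφ hψ c) ((hsol φ hφ).add_const_mul (hsol ψ hψ) c)).symm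

end Uniqueness

/-- The seminorms of `F`, with `(k, true)` indexing `‖·‖_k` and `(k, false)` indexing `p_k`. -/
noncomputable def seminormF (b τ : ℕ → ℝ) (n : ℕ → ℕ) (φ : ℝ → ℝ) (q : ℕ × Bool) : ℝ :=
  if q.2 then normSemi φ q.1 else pSemi b τ n φ q.1

def BoundedBySeminorms (b τ : ℕ → ℝ) (n : ℕ → ℕ) (f : (ℝ → ℝ) → ℝ) : Prop :=
  ∃ C, 0 ≤ C ∧ ∃ (Λ : Finset (ℕ × Bool)) (hΛ : Λ.Nonempty),
    ∀ φ, memF b τ n φ → f φ ≤ C * Λ.sup' hΛ (seminormF b τ n φ)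

lemma boundedBySeminorms_seminormF (q : ℕ × Bool) :
    BoundedBySeminorms b τ n (fun φ => seminormF b τ n φ q) :=
  ⟨1, zero_le_one, {q}, singleton_nonempty q, fun φ _ => by rw [sup'_singleton, one_mul]⟩

lemma boundedBySeminorms_normSemi (k : ℕ) : BoundedBySeminorms b τ n (fun φ => normSemi φ k) :=
  boundedBySeminorms_seminormF (k, true)

lemma boundedBySeminorms_pSemi (k : ℕ) : BoundedBySeminorms b τ n (fun φ => pSemi b τ n φ k) :=
  boundedBySeminorms_seminormF (k, false)

namespace BoundedBySeminorms

variable {f g : (ℝ → ℝ) → ℝ}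

lemma mono (hg : BoundedBySeminorms b τ n g) (h : ∀ φ, memF b τ n φ → f φ ≤ g φ) :
    BoundedBySeminorms b τ n f :=
  let ⟨C, hC, Λ, hΛ, hg⟩ := hg
  ⟨C, hC, Λ, hΛ, fun φ hφ => (h φ hφ).trans (hg φ hφ)⟩

lemma const_mul (hf : BoundedBySeminorms b τ n f) {c : ℝ} (hc : 0 ≤ c) :
    BoundedBySeminorms b τ n (fun φ => c * f φ) :=
  let ⟨C, hC, Λ, hΛ, hf⟩ := hf
  ⟨c * C, mul_nonneg hc hC, Λ, hΛ, fun φ hφ => by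
    rw [mul_assoc]; exact mul_le_mul_of_nonneg_left (hf φ hφ) hc⟩

lemma add (hf : BoundedBySeminorms b τ n f) (hg : BoundedBySeminorms b τ n g) :
    BoundedBySeminorms b τ n (fun φ => f φ + g φ) := by
  obtain ⟨C, hC, Λ₁, hΛ₁, hf⟩ := hf
  obtain ⟨D, hD, Λ₂, hΛ₂, hg⟩ := hg
  have hΛ₁₂ : (Λ₁ ∪ Λ₂).Nonempty := hΛ₁.mono subset_union_left
  refine ⟨C + D, add_nonneg hC hD, Λ₁ ∪ Λ₂, hΛ₁₂, fun φ hφ => ?_⟩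
  calc f φ + g φ ≤ C * Λ₁.sup' hΛ₁ (seminormF b τ n φ) + D * Λ₂.sup' hΛ₂ (seminormF b τ n φ) :=
        add_le_add (hf φ hφ) (hg φ hφ)
    _ ≤ C * (Λ₁ ∪ Λ₂).sup' hΛ₁₂ (seminormF b τ n φ)
          + D * (Λ₁ ∪ Λ₂).sup' hΛ₁₂ (seminormF b τ n φ) := by
        gcongr
        · exact subset_union_left
        · exact subset_union_right
    _ = (C + D) * (Λ₁ ∪ Λ₂).sup' hΛ₁₂ (seminormF b τ n φ) := by ring

lemma gronwallBound {δ ε : (ℝ → ℝ) → ℝ} (hδ : BoundedBySeminorms b τ n δ)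
    (hε : BoundedBySeminorms b τ n ε) {K x : ℝ} (hK : 0 ≤ K) (hx : 0 ≤ x) :
    BoundedBySeminorms b τ n (fun φ => _root_.gronwallBound (δ φ) K (ε φ) x) := by
  have h₁ : 0 ≤ _root_.gronwallBound 1 K 0 x := by
    rw [gronwallBound_ε0]; positivity
  have h₂ : 0 ≤ _root_.gronwallBound 0 K 1 x :=
    (gronwallBound_x0 0 K 1).symm.le.trans (gronwallBound_mono le_rfl zero_le_one hK hx)
  refine ((hδ.const_mul h₁).add (hε.const_mul h₂)).mono fun φ _ => le_of_eq ?_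
  rw [gronwallBound_eq_mul_add_mul (δ φ)]
  ring

end BoundedBySeminorms

lemma IsSolution.abs_tsum_delay_le (hn : nSpec τ n) {φ x : ℝ → ℝ} (hx : IsSolution a b τ φ x)
    (hφ : memF b τ n φ) {k : ℕ} {u R : ℝ} (hu : u ∈ Icc 0 (k * τ 0))
    (hR : ∀ i < n k, |x (u - τ i)| ≤ R) :
    |∑' i, b i * x (u - τ i)| ≤ (∑ i ∈ range (n k), |b i|) * R + pSemi b τ n φ k := by
  have habs : Summable fun i => |b i * x (u - τ i)| := (hx.2.2.1 u hu.1).abs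
  have htail : ∀ i, |b (i + n k) * x (u - τ (i + n k))| ≤ pTerm b τ φ k (n k + i) := fun i => by
    have hj := (hn k).1 (n k + i) (Nat.le_add_right _ _)
    rw [add_comm i, hx.2.1 _ (by linarith [hu.2])]
    exact abs_le_pTerm (hφ.1.mono (Icc_sub_subset_Iic hj)) hu
  calc |∑' i, b i * x (u - τ i)| ≤ ∑' i, |b i * x (u - τ i)| := by
        simpa only [Real.norm_eq_abs] using
          norm_tsum_le_tsum_norm (f := fun i => b i * x (u - τ i))
            (by simpa only [Real.norm_eq_abs] using habs)
    _ = ∑ i ∈ range (n k), |b i * x (u - τ i)| + ∑' i, |b (i + n k) * x (u - τ (i + n k))| :=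
        (habs.sum_add_tsum_nat_add _).symm
    _ ≤ _ := by
        rw [sum_mul]
        refine add_le_add (sum_le_sum fun i hi => ?_)
          (((summable_nat_add_iff _).2 habs).tsum_le_tsum htail (hφ.2 k))
        rw [abs_mul]
        exact mul_le_mul_of_nonneg_left (hR i (mem_range.1 hi)) (abs_nonneg _)

lemma IsSolution.abs_le_gronwallBound {φ x : ℝ → ℝ} (hx : IsSolution a b τ φ x) {T h δ ε : ℝ}
    (hT : 0 ≤ T) (hxT : |x T| ≤ δ)
    (hdelay : ∀ u ∈ Ico T (T + h), |∑' i, b i * x (u - τ i)| ≤ ε) {v : ℝ}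
    (hv : v ∈ Icc T (T + h)) : |x v| ≤ gronwallBound δ |a| ε (v - T) :=
  norm_le_gronwallBound_of_norm_deriv_right_le hx.1.continuousOn
    (fun u hu => (hx.2.2.2.1 u (hT.trans hu.1)).mono (Ici_subset_Ici.2 (hT.trans hu.1))) hxT
    (fun u hu => by
      simp only [Real.norm_eq_abs]
      exact (abs_add_le _ _).trans (by rw [abs_mul]; linarith [hdelay u hu])) v hv

section Semigroup

variable {sol : (ℝ → ℝ) → ℝ → ℝ}

theorem exists_boundedBySeminorms_abs_sol_le (hτ : Monotone τ) (hτ0 : 0 < τ 0)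
    (hn : nSpec τ n) (hsol : ∀ φ, memF b τ n φ → IsSolution a b τ φ (sol φ)) (m : ℕ) :
    ∀ M : ℕ, ∃ g, BoundedBySeminorms b τ n g ∧
      ∀ φ, memF b τ n φ → ∀ v ∈ Icc (-(M:ℝ)) (m * τ 0), |sol φ v| ≤ g φ := by
  induction m with
  | zero =>
    refine fun M => ⟨fun φ => normSemi φ M, boundedBySeminorms_normSemi M, fun φ hφ v hv => ?_⟩
    have hv0 : v ≤ 0 := by simpa using hv.2
    rw [(hsol φ hφ).2.1 v hv0]
    exact abs_le_normSemi hφ.1 ⟨hv.1, hv0⟩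
  | succ m ih =>
    intro M
    set N := n (m + 1)
    obtain ⟨g, hg, hbound⟩ := ih (max M ⌈τ N⌉₊)
    set B := ∑ i ∈ range N, |b i|
    have hB : 0 ≤ B := sum_nonneg fun _ _ => abs_nonneg _
    set ε := fun φ => B * g φ + pSemi b τ n φ (m + 1)
    refine ⟨fun φ => g φ + gronwallBound (g φ) |a| (ε φ) (τ 0),
      hg.add (hg.gronwallBound ((hg.const_mul hB).add (boundedBySeminorms_pSemi _))
        (abs_nonneg a) hτ0.le), fun φ hφ v hv => ?_⟩
    have hx := hsol φ hφ
    have hT : (0:ℝ) ≤ m * τ 0 := by positivity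
    have hM : -((max M ⌈τ N⌉₊ : ℕ) : ℝ) ≤ 0 := by simp
    have hg0 : 0 ≤ g φ := (abs_nonneg _).trans (hbound φ hφ 0 ⟨hM, hT⟩)
    have hε0 : 0 ≤ ε φ := add_nonneg (mul_nonneg hB hg0) (pSemi_nonneg _ _)
    have hmono := gronwallBound_mono hg0 hε0 (abs_nonneg a)
    have hgb0 : 0 ≤ gronwallBound (g φ) |a| (ε φ) (τ 0) :=
      hg0.trans_eq (gronwallBound_x0 _ _ _).symm |>.trans (hmono hτ0.le)
    rcases le_or_gt v (m * τ 0) with hvm | hvm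
    · have hM' : -((max M ⌈τ N⌉₊ : ℕ) : ℝ) ≤ -M := by simp
      calc |sol φ v| ≤ g φ := hbound φ hφ v ⟨hM'.trans hv.1, hvm⟩
        _ ≤ g φ + gronwallBound (g φ) |a| (ε φ) (τ 0) := le_add_of_nonneg_right hgb0
    have hv' : v ∈ Icc (m * τ 0) (m * τ 0 + τ 0) := ⟨hvm.le, by push_cast at hv; linarith [hv.2]⟩
    have hceil : τ N ≤ ((max M ⌈τ N⌉₊ : ℕ) : ℝ) :=
      (Nat.le_ceil _).trans (by exact_mod_cast le_max_right _ _)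
    have hdelay : ∀ u ∈ Ico (m * τ 0) (m * τ 0 + τ 0),
        |∑' i, b i * sol φ (u - τ i)| ≤ ε φ := by
      intro u hu
      refine hx.abs_tsum_delay_le hn hφ ⟨hT.trans hu.1, by push_cast; linarith [hu.2]⟩
        fun i hi => hbound φ hφ _ ⟨?_, by linarith [hu.2, hτ (Nat.zero_le i)]⟩
      linarith [hu.1, hτ hi.le]
    calc |sol φ v| ≤ gronwallBound (g φ) |a| (ε φ) (v - m * τ 0) :=
          hx.abs_le_gronwallBound hT (hbound φ hφ _ ⟨hM.trans hT, le_rfl⟩) hdelay hv'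
      _ ≤ gronwallBound (g φ) |a| (ε φ) (τ 0) := hmono (by linarith [hv'.2])
      _ ≤ _ := le_add_of_nonneg_left hg0

lemma boundedBySeminorms_normSemi_Sop (hτ : Monotone τ) (hτ0 : 0 < τ 0) (hn : nSpec τ n)
    (hsol : ∀ φ, memF b τ n φ → IsSolution a b τ φ (sol φ)) {t : ℝ} (ht : 0 ≤ t) (k : ℕ) :
    BoundedBySeminorms b τ n (fun φ => normSemi (Sop sol t φ) k) := by
  obtain ⟨m, -, hm⟩ := exists_le_and_add_mul_le hτ0 t k
  obtain ⟨g, hg, hbound⟩ := exists_boundedBySeminorms_abs_sol_le hτ hτ0 hn hsol m k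
  have hk : (0:ℝ) ≤ k * τ 0 := by positivity
  exact hg.mono fun φ hφ => normSemi_le fun θ hθ =>
    hbound φ hφ _ ⟨by linarith [hθ.1], by linarith [hθ.2]⟩

lemma boundedBySeminorms_pSemi_Sop (hτ : Monotone τ) (hτ0 : 0 < τ 0) (hn : nSpec τ n)
    (hsol : ∀ φ, memF b τ n φ → IsSolution a b τ φ (sol φ)) {t : ℝ} (ht : 0 ≤ t) (k : ℕ) :
    BoundedBySeminorms b τ n (fun φ => pSemi b τ n (Sop sol t φ) k) := by
  obtain ⟨m, hkm, hm⟩ := exists_le_and_add_mul_le hτ0 t k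
  obtain ⟨g, hg, hbound⟩ := exists_boundedBySeminorms_abs_sol_le hτ hτ0 hn hsol m ⌈τ (n m)⌉₊
  have hnk := hn.monotone hτ0.le hkm
  set L := n m - n k
  have hB : 0 ≤ ∑ i ∈ range L, |b (n k + i)| := sum_nonneg fun _ _ => abs_nonneg _
  refine ((hg.const_mul hB).add (boundedBySeminorms_pSemi m)).mono fun φ hφ => ?_
  have hg0 : 0 ≤ g φ := (abs_nonneg _).trans (hbound φ hφ 0 ⟨by simp, by positivity⟩)
  refine pSemi_le_of_head_tail (L := L) (hφ.2 m) (fun i hi => ?_) fun i => ?_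
  · refine pTerm_le_abs_mul hg0 fun s hs => hbound φ hφ _ ⟨?_, ?_⟩
    · have := (hτ (show n k + i ≤ n m by omega)).trans (Nat.le_ceil _)
      linarith [hs.1]
    · linarith [hs.2, hτ0.trans_le (hτ (Nat.zero_le (n k + i)))]
  · rw [show n k + (i + L) = n m + i by omega]
    exact pTerm_comp_add_le (hsol φ hφ).2.1 hφ.1 ht hm ((hn m).1 _ (Nat.le_add_right _ _))

end Semigroup

lemma tendsto_normSemi_comp_add_sub {x : ℝ → ℝ} (hx : Continuous x) (t₀ : ℝ) (k : ℕ) :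
    Tendsto (fun t => normSemi (fun θ => x (t + θ) - x (t₀ + θ)) k) (𝓝 t₀) (𝓝 0) :=
  tendsto_nhds_zero_of_eventually_lt (fun _ => normSemi_nonneg _ _) fun ε hε => by
    filter_upwards [eventually_forall_abs_sub_comp_add_lt hx (-k) 0 t₀ (half_pos hε)] with t ht
    exact (normSemi_le fun θ hθ => (ht θ hθ).le).trans_lt (half_lt_self hε)

lemma tendsto_pSemi_comp_add_sub (hτ : Monotone τ) (hτ0 : 0 < τ 0) (hn : nSpec τ n)
    {x φ : ℝ → ℝ} (hx : Continuous x) (hxφ : ∀ θ ≤ (0:ℝ), x θ = φ θ) (hφ : memF b τ n φ)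
    {t₀ : ℝ} (ht₀ : 0 ≤ t₀) (k : ℕ) :
    Tendsto (fun t => pSemi b τ n (fun θ => x (t + θ) - x (t₀ + θ)) k) (𝓝[Ici 0] t₀) (𝓝 0) := by
  refine tendsto_nhds_zero_of_eventually_lt (fun _ => pSemi_nonneg _ _) fun ε hε => ?_
  obtain ⟨K, hkK, hK⟩ := exists_le_and_add_mul_le hτ0 (t₀ + 1) k
  obtain ⟨J, hJ⟩ := ((tendsto_sum_nat_add fun i => pTerm b τ φ K (n K + i)).eventually
    (gt_mem_nhds (by positivity : 0 < ε / 4))).exists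
  have hnk := hn.monotone hτ0.le hkK
  set L := n K + J - n k
  set S := ∑ i ∈ range L, |b (n k + i)|
  have hS : 0 ≤ S := sum_nonneg fun _ _ => abs_nonneg _
  set η := ε / (2 * (S + 1))
  have hη : 0 < η := by positivity
  have hSη : S * η ≤ ε / 2 := by
    rw [mul_div_assoc', div_le_div_iff₀ (by positivity) two_pos]
    nlinarith
  filter_upwards [self_mem_nhdsWithin, nhdsWithin_le_nhds (Metric.ball_mem_nhds t₀ one_pos),
    nhdsWithin_le_nhds (eventually_forall_abs_sub_comp_add_lt hx (-τ (n k + L)) (k * τ 0) t₀ hη)]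
    with t (ht : 0 ≤ t) htt₀ hclose
  have ht1 : t < t₀ + 1 := by
    rw [Metric.mem_ball, Real.dist_eq] at htt₀; linarith [(abs_lt.1 htt₀).2]
  have hhead : ∀ i < L, pTerm b τ (fun θ => x (t + θ) - x (t₀ + θ)) k (n k + i)
      ≤ |b (n k + i)| * η := fun i hi => by
    refine pTerm_le_abs_mul hη.le fun s hs => (hclose _ ⟨?_, ?_⟩).le
    · linarith [hs.1, hτ (show n k + i ≤ n k + L by omega)]
    · linarith [hs.2, hτ0.trans_le (hτ (Nat.zero_le (n k + i)))]
  have htail : ∀ i, pTerm b τ (fun θ => x (t + θ) - x (t₀ + θ)) k (n k + (i + L))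
      ≤ 2 * pTerm b τ φ K (n K + (i + J)) := fun i => by
    rw [show n k + (i + L) = n K + (i + J) by omega, two_mul]
    have hj := (hn K).1 (n K + (i + J)) (by omega)
    exact (pTerm_sub_le (hx.comp (continuous_const_add t)).continuousOn
      (hx.comp (continuous_const_add t₀)).continuousOn).trans
      (add_le_add (pTerm_comp_add_le hxφ hφ.1 ht (by linarith) hj)
        (pTerm_comp_add_le hxφ hφ.1 ht₀ (by linarith) hj))
  calc pSemi b τ n (fun θ => x (t + θ) - x (t₀ + θ)) k
      ≤ S * η + ∑' i, 2 * pTerm b τ φ K (n K + (i + J)) :=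
        pSemi_le_of_head_tail (((summable_nat_add_iff J).2 (hφ.2 K)).mul_left 2) hhead htail
    _ < ε := by rw [tsum_mul_left]; linarith

end

theorem solution_semigroup_general (a : ℝ) (b τ : ℕ → ℝ) (n : ℕ → ℕ)
    (hτ : StrictMono τ) (hτpos : ∀ i, 0 < τ i)
    (hn : nSpec τ n)
    (sol : (ℝ → ℝ) → ℝ → ℝ)
    (hsol : ∀ φ, memF b τ n φ → IsSolution a b τ φ (sol φ))
    (huniq : ∀ φ x, memF b τ n φ → IsSolution a b τ φ x → x = sol φ) :
    -- S_0 = I on F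
    (∀ φ, memF b τ n φ → ∀ θ ≤ (0:ℝ), Sop sol 0 φ θ = φ θ) ∧
    -- S_t maps F into F
    (∀ t ≥ (0:ℝ), ∀ φ, memF b τ n φ → memF b τ n (Sop sol t φ)) ∧
    -- semigroup property S_{t+s} = S_t S_s
    (∀ t ≥ (0:ℝ), ∀ s ≥ (0:ℝ), ∀ φ, memF b τ n φ → ∀ θ ≤ (0:ℝ),
      Sop sol (t + s) φ θ = Sop sol t (Sop sol s φ) θ) ∧
    -- linearity of S_t on F
    (∀ t ≥ (0:ℝ), ∀ φ ψ, memF b τ n φ → memF b τ n ψ → ∀ c : ℝ, ∀ θ ≤ (0:ℝ),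
      Sop sol t (fun θ' => φ θ' + c * ψ θ') θ = Sop sol t φ θ + c * Sop sol t ψ θ) ∧
    -- boundedness (hence continuity) of S_t: each seminorm of S_t φ is bounded by
    -- a constant times the max of finitely many seminorms of φ
    (∀ t ≥ (0:ℝ), ∀ k : ℕ, ∃ C : ℝ, 0 ≤ C ∧ ∃ (Λ : Finset (ℕ × Bool)) (hΛ : Λ.Nonempty),
      ∀ φ, memF b τ n φ →
        normSemi (Sop sol t φ) k ≤
          C * Λ.sup' hΛ (fun q => if q.2 then normSemi φ q.1 else pSemi b τ n φ q.1) ∧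
        pSemi b τ n (Sop sol t φ) k ≤
          C * Λ.sup' hΛ (fun q => if q.2 then normSemi φ q.1 else pSemi b τ n φ q.1)) ∧
    -- strong continuity of t ↦ S_t φ
    (∀ φ, memF b τ n φ → ∀ t₀ ≥ (0:ℝ), ∀ k : ℕ,
      Tendsto (fun t => normSemi (fun θ => Sop sol t φ θ - Sop sol t₀ φ θ) k)
        (𝓝[Set.Ici (0:ℝ)] t₀) (nhds 0) ∧
      Tendsto (fun t => pSemi b τ n (fun θ => Sop sol t φ θ - Sop sol t₀ φ θ) k)
        (𝓝[Set.Ici (0:ℝ)] t₀) (nhds 0)) := by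
  have hτ0 := hτpos 0
  refine ⟨fun φ hφ θ hθ => ?_, fun t ht φ hφ => ?_, fun t _ s hs φ hφ θ _ => ?_,
    fun t _ φ ψ hφ hψ c θ _ => ?_, fun t ht k => ?_, fun φ hφ t₀ ht₀ k => ⟨?_, ?_⟩⟩
  · exact (congrArg (sol φ) (zero_add θ)).trans ((hsol φ hφ).2.1 θ hθ)
  · exact memF_comp_add hτ0 hn (hsol φ hφ).1 (hsol φ hφ).2.1 hφ ht
  · exact congrFun (Sop_add hτ0 hn hsol huniq hφ t hs) θ
  · exact congrFun (sol_add_const_mul hn hsol huniq hφ hψ c) (t + θ)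
  · obtain ⟨C, hC, Λ, hΛ, hbound⟩ :=
      (boundedBySeminorms_normSemi_Sop hτ.monotone hτ0 hn hsol ht k).add
        (boundedBySeminorms_pSemi_Sop hτ.monotone hτ0 hn hsol ht k)
    exact ⟨C, hC, Λ, hΛ, fun φ hφ =>
      ⟨(le_add_of_nonneg_right (pSemi_nonneg _ _)).trans (hbound φ hφ),
        (le_add_of_nonneg_left (normSemi_nonneg _ _)).trans (hbound φ hφ)⟩⟩
  · exact (tendsto_normSemi_comp_add_sub (hsol φ hφ).1 t₀ k).mono_left nhdsWithin_le_nhds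
  · exact tendsto_pSemi_comp_add_sub hτ.monotone hτ0 hn (hsol φ hφ).1 (hsol φ hφ).2.1 hφ ht₀ k

/-- the family S_t, t ≥ 0, built from the unique solutions x_φ of
the delay equation, is a strongly continuous semigroup of continuous (bounded)
linear operators on the Fréchet space F: S_0 = I, S_{t+s} = S_t ∘ S_s, S_t maps
F into F linearly, each S_t is bounded with respect to the seminorms, and
t ↦ S_t φ is continuous from [0,∞) into F for each φ ∈ F. -/
theorem solution_semigroup (a : ℝ) (b τ : ℕ → ℝ) (n : ℕ → ℕ)
    (hτ : StrictMono τ) (hτpos : ∀ i, 0 < τ i)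
    (hτtop : Tendsto τ atTop atTop) (hn : nSpec τ n)
    (sol : (ℝ → ℝ) → ℝ → ℝ)
    (hsol : ∀ φ, memF b τ n φ → IsSolution a b τ φ (sol φ))
    (huniq : ∀ φ x, memF b τ n φ → IsSolution a b τ φ x → x = sol φ) :
    -- S_0 = I on F
    (∀ φ, memF b τ n φ → ∀ θ ≤ (0:ℝ), Sop sol 0 φ θ = φ θ) ∧
    -- S_t maps F into F
    (∀ t ≥ (0:ℝ), ∀ φ, memF b τ n φ → memF b τ n (Sop sol t φ)) ∧
    -- semigroup property S_{t+s} = S_t S_s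
    (∀ t ≥ (0:ℝ), ∀ s ≥ (0:ℝ), ∀ φ, memF b τ n φ → ∀ θ ≤ (0:ℝ),
      Sop sol (t + s) φ θ = Sop sol t (Sop sol s φ) θ) ∧
    -- linearity of S_t on F
    (∀ t ≥ (0:ℝ), ∀ φ ψ, memF b τ n φ → memF b τ n ψ → ∀ c : ℝ, ∀ θ ≤ (0:ℝ),
      Sop sol t (fun θ' => φ θ' + c * ψ θ') θ = Sop sol t φ θ + c * Sop sol t ψ θ) ∧
    -- boundedness (hence continuity) of S_t: each seminorm of S_t φ is bounded by
    -- a constant times the max of finitely many seminorms of φ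
    (∀ t ≥ (0:ℝ), ∀ k : ℕ, ∃ C : ℝ, 0 ≤ C ∧ ∃ (Λ : Finset (ℕ × Bool)) (hΛ : Λ.Nonempty),
      ∀ φ, memF b τ n φ →
        normSemi (Sop sol t φ) k ≤
          C * Λ.sup' hΛ (fun q => if q.2 then normSemi φ q.1 else pSemi b τ n φ q.1) ∧
        pSemi b τ n (Sop sol t φ) k ≤
          C * Λ.sup' hΛ (fun q => if q.2 then normSemi φ q.1 else pSemi b τ n φ q.1)) ∧
    -- strong continuity of t ↦ S_t φ
    (∀ φ, memF b τ n φ → ∀ t₀ ≥ (0:ℝ), ∀ k : ℕ,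
      Tendsto (fun t => normSemi (fun θ => Sop sol t φ θ - Sop sol t₀ φ θ) k)
        (𝓝[Set.Ici (0:ℝ)] t₀) (nhds 0) ∧
      Tendsto (fun t => pSemi b τ n (fun θ => Sop sol t φ θ - Sop sol t₀ φ θ) k)
        (𝓝[Set.Ici (0:ℝ)] t₀) (nhds 0)) :=
  solution_semigroup_general a b τ n hτ hτpos hn sol hsol huniq
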